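/- Let P be a Horn ℱ-program without constraint clauses. Then P has a largest derivable model, namely the result of the canonical P-computation with respect to the set At of all atoms; every derivable model of P is contained in it. -/

import Mathlib

/-- An abstract-constraint clause: head constraint `hdC` over head set `hset`,
positive body literals `pos` and negated body literals `neg`, each a pair
(constraint, atom set). -/
structure ACClause (At : Type*) where
  hdC : Set (Set At)
  hset : Set At
  pos : List (Set (Set At) × Set At)
  neg : List (Set (Set At) × Set At)

/-- M ⊨ C(X) iff M ∩ X ∈ C. -/
def satAtom {At : Type*} (M : Set At) (A : Set (Set At) × Set At) : Prop :=
  M ∩ A.2 ∈ A.1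

def satBody {At : Type*} (M : Set At) (r : ACClause At) : Prop :=
  (∀ A ∈ r.pos, satAtom M A) ∧ (∀ A ∈ r.neg, ¬ satAtom M A)

def satHead {At : Type*} (M : Set At) (r : ACClause At) : Prop :=
  M ∩ r.hset ∈ r.hdC

/-- A constraint is monotone (upward closed). -/
def MonoC {At : Type*} (C : Set (Set At)) : Prop :=
  ∀ A A' : Set At, A ∈ C → A ⊆ A' → A' ∈ C

def MonoClause {At : Type*} (r : ACClause At) : Prop :=
  MonoC r.hdC ∧ (∀ A ∈ r.pos, MonoC A.1) ∧ (∀ A ∈ r.neg, MonoC A.1)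

/-- All atom sets of a clause are finite. -/
def FinClause {At : Type*} (r : ACClause At) : Prop :=
  r.hset.Finite ∧ (∀ A ∈ r.pos, A.2.Finite) ∧ (∀ A ∈ r.neg, A.2.Finite)

/-- The head constraint atom of `r` is consistent. -/
def ConsHead {At : Type*} (r : ACClause At) : Prop :=
  ∃ M : Set At, satHead M r

def Models {At : Type*} (M : Set At) (P : Set (ACClause At)) : Prop :=
  ∀ r ∈ P, satBody M r → satHead M r

/-- The M-applicable clauses P(M). -/
def appl {At : Type*} (P : Set (ACClause At)) (M : Set At) : Set (ACClause At) :=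
  {r ∈ P | satBody M r}

/-- hset(P(M)): union of head sets of M-applicable clauses. -/
def hsetP {At : Type*} (P : Set (ACClause At)) (M : Set At) : Set At :=
  ⋃ r ∈ appl P M, r.hset

/-- The nondeterministic one-step provability operator. -/
def Tnd {At : Type*} (P : Set (ACClause At)) (M : Set At) : Set (Set At) :=
  {M' | M' ⊆ hsetP P M ∧ ∀ r ∈ appl P M, satHead M' r}

/-- A monotone ℱ-program: all constraints monotone, all atom sets finite. -/
def MonoProg {At : Type*} (P : Set (ACClause At)) : Prop :=
  ∀ r ∈ P, MonoClause r ∧ FinClause r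

/-- A Horn ℱ-program: monotone, finite atom sets, no negation. -/
def Horn {At : Type*} (P : Set (ACClause At)) : Prop :=
  ∀ r ∈ P, r.neg = [] ∧ MonoClause r ∧ FinClause r

/-- A P-computation. -/
def IsComputation {At : Type*} (P : Set (ACClause At)) (t : ℕ → Set At) : Prop :=
  t 0 = ∅ ∧ ∀ n, t n ⊆ t (n + 1) ∧ t (n + 1) ∈ Tnd P (t n)

/-- M is a derivable model of P: the result of some P-computation. -/
def Derivable {At : Type*} (P : Set (ACClause At)) (M : Set At) : Prop :=
  ∃ t, IsComputation P t ∧ M = ⋃ n, t n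

def stripNeg {At : Type*} (r : ACClause At) : ACClause At :=
  { r with neg := [] }

/-- The reduct P^M. -/
def reduct {At : Type*} (P : Set (ACClause At)) (M : Set At) : Set (ACClause At) :=
  {r' | ∃ r ∈ P, (∀ A ∈ r.neg, ¬ satAtom M A) ∧ r' = stripNeg r}

/-- M is a stable model of P: M is a derivable model of the reduct P^M. -/
def Stable {At : Type*} (P : Set (ACClause At)) (M : Set At) : Prop :=
  Derivable (reduct P M) M

/-- The canonical P-computation with respect to M. -/
def canon {At : Type*} (P : Set (ACClause At)) (M : Set At) : ℕ → Set At
  | 0 => ∅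
  | n + 1 => hsetP P (canon P M n) ∩ M

/-- A definite head: the head set is a minimal element of the head constraint. -/
def DefHead {At : Type*} (r : ACClause At) : Prop :=
  r.hset ∈ r.hdC ∧ ∀ Y ∈ r.hdC, Y ⊆ r.hset → Y = r.hset

/-! Without negation the operator `M ↦ hset(P(M))` is monotone, so its iterates from `∅` — the
canonical computation with respect to `At` — increase. A consistent monotone head is satisfied by
every interpretation containing its head set, hence by `hset(P(M))` whenever the clause is `M`-applicable: each
iterate is one-step provable from the previous one. Conversely, every step of a `P`-computation
lies inside `hset(P(·))` of the previous step, so by monotonicity every computation stays below the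
canonical one, stage by stage. -/

section

variable {At : Type*}

lemma satBody_mono {r : ACClause At} (hneg : r.neg = []) (hpos : ∀ A ∈ r.pos, MonoC A.1)
    {M M' : Set At} (h : M ⊆ M') (hb : satBody M r) : satBody M' r := by
  refine ⟨fun A hA => hpos A hA _ _ (hb.1 A hA) (Set.inter_subset_inter_left _ h), ?_⟩
  simp [hneg]

lemma appl_mono {P : Set (ACClause At)} (hP : Horn P) {M M' : Set At} (h : M ⊆ M') :
    appl P M ⊆ appl P M' := fun r ⟨hr, hb⟩ =>
  ⟨hr, satBody_mono (hP r hr).1 (hP r hr).2.1.2.1 h hb⟩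

lemma hsetP_mono {P : Set (ACClause At)} (hP : Horn P) {M M' : Set At} (h : M ⊆ M') :
    hsetP P M ⊆ hsetP P M' :=
  Set.biUnion_subset_biUnion_left (appl_mono hP h)

lemma satHead_of_hset_subset {r : ACClause At} (hmono : MonoC r.hdC) (hcons : ConsHead r)
    {M : Set At} (h : r.hset ⊆ M) : satHead M r := by
  obtain ⟨N, hN⟩ := hcons
  exact hmono _ _ hN fun x hx => ⟨h hx.2, hx.2⟩

lemma hsetP_mem_Tnd {P : Set (ACClause At)} (hmono : ∀ r ∈ P, MonoC r.hdC)
    (hcons : ∀ r ∈ P, ConsHead r) (M : Set At) : hsetP P M ∈ Tnd P M :=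
  ⟨subset_rfl, fun r hr =>
    satHead_of_hset_subset (hmono r hr.1) (hcons r hr.1) (Set.subset_biUnion_of_mem hr)⟩

lemma canon_univ_succ (P : Set (ACClause At)) (n : ℕ) :
    canon P Set.univ (n + 1) = hsetP P (canon P Set.univ n) :=
  Set.inter_univ _

lemma canon_univ_subset_succ {P : Set (ACClause At)} (hP : Horn P) (n : ℕ) :
    canon P Set.univ n ⊆ canon P Set.univ (n + 1) := by
  induction n with
  | zero => exact Set.empty_subset _
  | succ n ih =>
    rw [canon_univ_succ, canon_univ_succ]
    exact hsetP_mono hP ih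

lemma isComputation_canon_univ {P : Set (ACClause At)} (hP : Horn P)
    (hcons : ∀ r ∈ P, ConsHead r) : IsComputation P (canon P Set.univ) :=
  ⟨rfl, fun n => ⟨canon_univ_subset_succ hP n, by
    rw [canon_univ_succ]
    exact hsetP_mem_Tnd (fun r hr => (hP r hr).2.1.1) hcons _⟩⟩

lemma IsComputation.subset_canon_univ {P : Set (ACClause At)} (hP : Horn P) {t : ℕ → Set At}
    (ht : IsComputation P t) (n : ℕ) : t n ⊆ canon P Set.univ n := by
  induction n with
  | zero => exact ht.1.subset
  | succ n ih =>
    rw [canon_univ_succ]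
    exact (ht.2 n).2.1.trans (hsetP_mono hP ih)

end

theorem stmt10 {At : Type*} (P : Set (ACClause At)) (hP : Horn P)
    (hcons : ∀ r ∈ P, ConsHead r) :
    Derivable P (⋃ n, canon P (Set.univ : Set At) n) ∧
      ∀ M : Set At, Derivable P M → M ⊆ ⋃ n, canon P (Set.univ : Set At) n := by
  refine ⟨⟨_, isComputation_canon_univ hP hcons, rfl⟩, ?_⟩
  rintro M ⟨t, ht, rfl⟩
  exact Set.iUnion_mono (ht.subset_canon_univ hP)
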